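/- Let X, Y be compact Hausdorff spaces, E, F Banach spaces over 𝕂 ∈ {ℝ, ℂ} with F strictly convex, and A, B 𝕂-linear subspaces of C(X,E) and C(Y,F), respectively, such that Ch(A) ⊆ Θ(A). Then for any surjective (not necessarily linear) isometry T : A → B there exist a subset Z of Y, a continuous surjection φ : Z → Ch(A), and a family {V_y}_{y∈Z} of real-linear operators from E to F with ‖V_y‖ = 1 for all y ∈ Z, such that Tf(y) = T0(y) + V_y(f(φ(y))) for all f ∈ A and all y ∈ Z. -/

import Mathlib

/-!
By Mazur–Ulam, `S = T - T0` is a real-linear isometry of `A` into `C(Y, F)`. Fix a strong boundary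
point `x` and a unit vector `u`. The norm-one functions of `A` with value `u` at `x` form a convex
set, so their images are a convex set of norm-one functions on `Y`; strict convexity of `F` and
compactness of `Y` give them a common peak point `y` and a common value `v` there. Adding to such
peaking functions a function vanishing at `x` shows that `S f (y)` only depends on `f x`, which
defines `V_y` with `V_y u = v`. Finally, functions peaking at `x` and small off a neighbourhood of
`x` make the point `x` attached to `y` unique and continuous in `y`.
-/

open Set Metric

variable {𝕂 : Type*} [RCLike 𝕂]
variable {X : Type*} [TopologicalSpace X] [CompactSpace X] [T2Space X]
variable {Y : Type*} [TopologicalSpace Y] [CompactSpace Y] [T2Space Y]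
variable {E : Type*} [NormedAddCommGroup E] [NormedSpace ℝ E] [NormedSpace 𝕂 E]
  [IsScalarTower ℝ 𝕂 E] [CompleteSpace E]
variable {F : Type*} [NormedAddCommGroup F] [NormedSpace ℝ F] [NormedSpace 𝕂 F]
  [IsScalarTower ℝ 𝕂 F] [CompleteSpace F]

/-- The set `Θ(A)` of strong boundary points of a set `A` of functions in `C(X,E)`. -/
def strongBoundaryPoints {Z M : Type*} [TopologicalSpace Z] [CompactSpace Z]
    [NormedAddCommGroup M] (A : Set C(Z, M)) : Set Z :=
  {x | ∀ U ∈ nhds x, ∀ ε : ℝ, 0 < ε → ∀ u : M, ‖u‖ = 1 →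
    ∃ f ∈ A, ‖f‖ = 1 ∧ f x = u ∧ ∀ y, y ∉ U → ‖f y‖ < ε}

/-- The Choquet boundary of a subspace `A` of `C(X,E)`: points `x` for which there
is an extreme point `ν` of the closed unit ball of `E*` such that the functional
`f ↦ ν (f x)` on `A` is an extreme point of the closed unit ball of `A*`. -/
def choquetBoundary (A : Subspace 𝕂 C(X, E)) : Set X :=
  {x | ∃ ν : StrongDual 𝕂 E,
    ν ∈ Set.extremePoints ℝ (closedBall (0 : StrongDual 𝕂 E) 1) ∧
    ∃ φ : StrongDual 𝕂 ↥A,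
      φ ∈ Set.extremePoints ℝ (closedBall (0 : StrongDual 𝕂 ↥A) 1) ∧
      ∀ f : ↥A, φ f = ν ((f : C(X, E)) x)}

section StrictConvex

variable {F : Type*} [NormedAddCommGroup F] [NormedSpace ℝ F] [StrictConvexSpace ℝ F]

theorem eq_of_norm_le_of_norm_midpoint_eq {u v : F} {r : ℝ} (hu : ‖u‖ ≤ r) (hv : ‖v‖ ≤ r)
    (h : ‖(1 / 2 : ℝ) • u + (1 / 2 : ℝ) • v‖ = r) : u = v := by
  by_contra hne
  exact (norm_combo_lt_of_ne hu hv hne one_half_pos one_half_pos (add_halves 1)).ne h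

theorem eq_zero_of_norm_add_le_of_norm_sub_le {v w : F} {r : ℝ} (hv : ‖v‖ = r)
    (hadd : ‖v + w‖ ≤ r) (hsub : ‖v - w‖ ≤ r) : w = 0 := by
  have hmid : (1 / 2 : ℝ) • (v + w) + (1 / 2 : ℝ) • (v - w) = v := by
    rw [← smul_add, add_add_sub_cancel, ← two_smul ℝ, smul_smul]
    norm_num
  have hvw := eq_of_norm_le_of_norm_midpoint_eq hadd hsub (by rwa [hmid])
  have h2w : (2 : ℝ) • w = 0 := by
    rw [two_smul, ← sub_eq_zero.mpr hvw]
    abel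
  exact (smul_eq_zero.mp h2w).resolve_left two_ne_zero

end StrictConvex

namespace ContinuousMap

variable {Y F : Type*} [TopologicalSpace Y] [CompactSpace Y] [NormedAddCommGroup F]

theorem exists_norm_apply_eq_norm [Nonempty Y] (f : C(Y, F)) : ∃ y, ‖f y‖ = ‖f‖ := by
  obtain ⟨y, hy⟩ := f.continuous.norm.exists_forall_ge (by simp [Filter.cocompact_eq_bot])
  exact ⟨y, le_antisymm (f.norm_coe_le_norm y) ((f.norm_le (norm_nonneg _)).mpr hy)⟩

/-- The peak sets `{y | ‖p y‖ = 1}` are directed: by strict convexity, the peak set of a midpoint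
lies in those of its endpoints. -/
theorem exists_forall_apply_eq_of_convex [NormedSpace ℝ F] [StrictConvexSpace ℝ F]
    {P : Set C(Y, F)} (hP : Convex ℝ P) (hne : P.Nonempty) (hnorm : ∀ p ∈ P, ‖p‖ = 1) :
    ∃ y v, ‖v‖ = 1 ∧ ∀ p ∈ P, p y = v := by
  obtain ⟨p₀, hp₀⟩ := hne
  have : Nonempty Y := by
    by_contra hY
    have : IsEmpty Y := not_nonempty_iff.mp hY
    simpa [Subsingleton.elim p₀ 0] using hnorm p₀ hp₀
  have : Nonempty P := ⟨⟨p₀, hp₀⟩⟩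
  have hle : ∀ p ∈ P, ∀ y, ‖p y‖ ≤ 1 := fun p hp y => hnorm p hp ▸ p.norm_coe_le_norm y
  have hmid : ∀ p ∈ P, ∀ q ∈ P, (1 / 2 : ℝ) • p + (1 / 2 : ℝ) • q ∈ P := fun p hp q hq =>
    hP hp hq one_half_pos.le one_half_pos.le (add_halves 1)
  have heq : ∀ p ∈ P, ∀ q ∈ P, ∀ y, ‖((1 / 2 : ℝ) • p + (1 / 2 : ℝ) • q) y‖ = 1 → p y = q y :=
    fun p hp q hq y h => eq_of_norm_le_of_norm_midpoint_eq (hle p hp y) (hle q hq y) h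
  let K : P → Set Y := fun p => {y | ‖(p : C(Y, F)) y‖ = 1}
  have hdir : Directed (· ⊇ ·) K := by
    rintro ⟨p, hp⟩ ⟨q, hq⟩
    refine ⟨⟨_, hmid p hp q hq⟩, fun y hy => ?_, fun y hy => ?_⟩ <;>
      have hpq := heq p hp q hq y hy <;>
      simp only [K, mem_ofPred_eq, add_apply, smul_apply, hpq, ← add_smul, add_halves,
        one_smul] at hy ⊢ <;>
      exact hy
  obtain ⟨y, hy⟩ := IsCompact.nonempty_iInter_of_directed_nonempty_isCompact_isClosed K hdir
    (fun p => (p.1.exists_norm_apply_eq_norm).imp fun y hy => hy.trans (hnorm p p.2))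
    (fun p => (isClosed_eq (p.1.continuous.norm) continuous_const).isCompact)
    (fun p => isClosed_eq (p.1.continuous.norm) continuous_const)
  have hy : ∀ p ∈ P, ‖p y‖ = 1 := fun p hp => mem_iInter.mp hy ⟨p, hp⟩
  exact ⟨y, p₀ y, hy p₀ hp₀, fun p hp => heq p hp p₀ hp₀ y (hy _ (hmid p hp p₀ hp₀))⟩

end ContinuousMap

theorem LinearMap.exists_comp_eq_of_ker_le {R M E F : Type*} [Ring R] [AddCommGroup M]
    [Module R M] [AddCommGroup E] [Module R E] [AddCommGroup F] [Module R F]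
    {L : M →ₗ[R] E} (hL : Function.Surjective L) {Φ : M →ₗ[R] F} (h : ker L ≤ ker Φ) :
    ∃ V : E →ₗ[R] F, V ∘ₗ L = Φ :=
  ⟨(ker L).liftQ Φ h ∘ₗ (L.quotKerEquivOfSurjective hL).symm.toLinearMap, by ext m; simp⟩

theorem exists_linearIsometry_apply_eq_sub {M N : Type*} [NormedAddCommGroup M]
    [NormedSpace ℝ M] [NormedAddCommGroup N] [NormedSpace ℝ N]
    (A : Submodule ℝ M) (B : Submodule ℝ N) (T : M → N) (hmap : ∀ f ∈ A, T f ∈ B)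
    (hsurj : ∀ g ∈ B, ∃ f ∈ A, T f = g) (hiso : ∀ f ∈ A, ∀ g ∈ A, ‖T f - T g‖ = ‖f - g‖) :
    ∃ S : A →ₗᵢ[ℝ] N, ∀ f : A, S f = T f - T 0 := by
  let T' : A → B := fun f => ⟨T f, hmap f f.2⟩
  have hT' : Isometry T' := Isometry.of_dist_eq fun f g => by
    rw [Subtype.dist_eq, Subtype.dist_eq, dist_eq_norm, dist_eq_norm]
    exact hiso f f.2 g g.2
  have hbij : Function.Bijective T' := ⟨hT'.injective, fun g => by
    obtain ⟨f, hf, hTf⟩ := hsurj g g.2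
    exact ⟨⟨f, hf⟩, Subtype.ext hTf⟩⟩
  let e : A ≃ᵢ B := ⟨Equiv.ofBijective T' hbij, hT'⟩
  exact ⟨B.subtypeₗᵢ.comp e.toRealLinearIsometryEquiv.toLinearIsometry,
    fun f => congrArg Subtype.val (e.toRealLinearIsometryEquiv_apply f)⟩

section StrongBoundary

open Filter Topology

variable {X Y E F : Type*} [TopologicalSpace X] [CompactSpace X] [TopologicalSpace Y]
  [CompactSpace Y] [NormedAddCommGroup E] [NormedSpace ℝ E] [NormedAddCommGroup F]
  [NormedSpace ℝ F] {A : Submodule ℝ C(X, E)} (S : A →ₗᵢ[ℝ] C(Y, F))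

theorem exists_apply_eq_norm_le_of_mem_strongBoundaryPoints {x : X}
    (hx : x ∈ strongBoundaryPoints (A : Set C(X, E))) (e : E) :
    ∃ f : A, (f : C(X, E)) x = e ∧ ‖f‖ ≤ ‖e‖ := by
  rcases eq_or_ne e 0 with rfl | he
  · exact ⟨0, rfl, by simp⟩
  obtain ⟨g, hgA, hgn, hgx, -⟩ :=
    hx univ univ_mem 1 one_pos (‖e‖⁻¹ • e) (norm_smul_inv_norm (𝕜 := ℝ) he)
  refine ⟨‖e‖ • ⟨g, hgA⟩, ?_, ?_⟩
  · change ‖e‖ • g x = e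
    rw [hgx, smul_inv_smul₀ (norm_ne_zero_iff.mpr he)]
  · rw [norm_smul, norm_norm]
    exact mul_le_of_le_one_right (norm_nonneg e) hgn.le

/-- The paper's `Tf(y) = T0(y) + V_y(f(φ(y)))` at a single point `y` with `φ(y) = x`, written for
`S = T - T0`. -/
def RepresentsAt (y : Y) (x : X) (V : E →L[ℝ] F) : Prop :=
  ‖V‖ = 1 ∧ ∀ f : A, S f y = V ((f : C(X, E)) x)

variable {S}

/-- A function peaking at `x` and small off `W` keeps `‖S g‖ > 1/2` near `y`, which is impossible
at a point representing some `x' ∉ W`. -/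
theorem RepresentsAt.eventually_mem {x : X} (hx : x ∈ strongBoundaryPoints (A : Set C(X, E)))
    {y : Y} {V : E →L[ℝ] F} (h : RepresentsAt S y x V) {W : Set X} (hW : W ∈ 𝓝 x) :
    ∀ᶠ y' in 𝓝 y, ∀ x' V', RepresentsAt S y' x' V' → x' ∈ W := by
  obtain ⟨u, hu, hVu⟩ := V.exists_nnnorm_eq_one_lt_apply_of_lt_opNNNorm (r := 1 / 2)
    (by rw [← NNReal.coe_lt_coe, coe_nnnorm, h.1]; norm_num)
  replace hu : ‖u‖ = 1 := congrArg NNReal.toReal hu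
  obtain ⟨g, hgA, -, hgx, hgW⟩ := hx W hW (1 / 2) one_half_pos u hu
  have hy : 1 / 2 < ‖S ⟨g, hgA⟩ y‖ := by
    rw [h.2, hgx]
    exact_mod_cast hVu
  filter_upwards [(isOpen_lt continuous_const (S ⟨g, hgA⟩).continuous.norm).mem_nhds hy]
    with y' hy' x' V' h'
  by_contra hx'
  have hle : ‖V' (g x')‖ ≤ ‖g x'‖ := by simpa [h'.1] using V'.le_opNorm (g x')
  have hlt : 1 / 2 < ‖V' (g x')‖ := h'.2 ⟨g, hgA⟩ ▸ hy'
  linarith [hgW x' hx']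

theorem RepresentsAt.eq [T1Space X] {x₁ x₂ : X}
    (hx₁ : x₁ ∈ strongBoundaryPoints (A : Set C(X, E))) {y : Y} {V₁ V₂ : E →L[ℝ] F}
    (h₁ : RepresentsAt S y x₁ V₁) (h₂ : RepresentsAt S y x₂ V₂) : x₂ = x₁ := by
  by_contra hne
  exact (h₁.eventually_mem hx₁ (isOpen_compl_singleton.mem_nhds (Ne.symm hne))).self_of_nhds
    x₂ V₂ h₂ rfl

variable (S) [StrictConvexSpace ℝ F]

theorem exists_forall_apply_eq_of_apply_eq {x : X}
    (hx : x ∈ strongBoundaryPoints (A : Set C(X, E))) {u : E} (hu : ‖u‖ = 1) :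
    ∃ y v, ‖v‖ = 1 ∧ ∀ f : A, ‖f‖ ≤ 1 → (f : C(X, E)) x = u → S f y = v := by
  let P : Set A := closedBall 0 1 ∩ {f | (f : C(X, E)) x = u}
  have hP : Convex ℝ P := (convex_closedBall 0 1).inter fun f hf g hg a b _ _ hab => by
    change a • (f : C(X, E)) x + b • (g : C(X, E)) x = u
    rw [hf, hg, ← add_smul, hab, one_smul]
  have hnorm : ∀ f ∈ P, ‖S f‖ = 1 := fun f hf => by
    rw [S.norm_map]
    refine le_antisymm (mem_closedBall_zero_iff.mp hf.1) ?_
    rw [← hu, ← hf.2]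
    exact ContinuousMap.norm_coe_le_norm _ x
  obtain ⟨f₀, hf₀, hf₀n⟩ := exists_apply_eq_norm_le_of_mem_strongBoundaryPoints hx u
  obtain ⟨y, v, hv, hyv⟩ := ContinuousMap.exists_forall_apply_eq_of_convex
    (hP.linear_image S.toLinearMap) ⟨S f₀, f₀, ⟨mem_closedBall_zero_iff.mpr (hu ▸ hf₀n), hf₀⟩, rfl⟩
    (by rintro - ⟨f, hf, rfl⟩; exact hnorm f hf)
  exact ⟨y, v, hv, fun f hf hfx => hyv _ ⟨f, ⟨mem_closedBall_zero_iff.mpr hf, hfx⟩, rfl⟩⟩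

/-- For `‖f‖ ≤ 1`, adding `f` to a function that peaks at `x` and is small where `f` is not raises
the norm by at most `δ`; so `‖v ± S f y‖ ≤ 1`, and strict convexity forces `S f y = 0`. -/
theorem apply_eq_zero_of_apply_eq_zero {x : X}
    (hx : x ∈ strongBoundaryPoints (A : Set C(X, E))) {u : E} (hu : ‖u‖ = 1) {y : Y} {v : F}
    (hv : ‖v‖ = 1) (hpeak : ∀ f : A, ‖f‖ ≤ 1 → (f : C(X, E)) x = u → S f y = v) {f : A}
    (hf : (f : C(X, E)) x = 0) : S f y = 0 := by
  have hsmall : ∀ g : A, (g : C(X, E)) x = 0 → ‖g‖ ≤ 1 → ‖v + S g y‖ ≤ 1 := by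
    intro g hgx hg
    refine le_of_forall_pos_le_add fun δ hδ => ?_
    have hU : {z | ‖(g : C(X, E)) z‖ < δ} ∈ 𝓝 x :=
      (isOpen_lt (g : C(X, E)).continuous.norm continuous_const).mem_nhds (by simpa [hgx])
    obtain ⟨h, hhA, hhn, hhx, hh⟩ := hx _ hU δ hδ u hu
    rw [← hpeak ⟨h, hhA⟩ hhn.le hhx, ← ContinuousMap.add_apply, ← map_add]
    refine ((S _).norm_coe_le_norm y).trans ?_
    rw [S.norm_map]
    refine (ContinuousMap.norm_le _ (by positivity)).mpr fun z => (norm_add_le _ _).trans ?_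
    have hhz : ‖h z‖ ≤ 1 := hhn ▸ h.norm_coe_le_norm z
    have hgz : ‖(g : C(X, E)) z‖ ≤ 1 := ((g : C(X, E)).norm_coe_le_norm z).trans hg
    change ‖h z‖ + ‖(g : C(X, E)) z‖ ≤ 1 + δ
    by_cases hz : ‖(g : C(X, E)) z‖ < δ
    · linarith
    · linarith [hh z hz]
  set t : ℝ := (‖f‖ + 1)⁻¹
  have ht : 0 < t := by positivity
  have htf : ‖t • f‖ ≤ 1 := by
    rw [norm_smul, Real.norm_of_nonneg ht.le, inv_mul_le_iff₀ (by positivity)]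
    linarith
  have htfx : ((t • f : A) : C(X, E)) x = 0 := by
    change t • (f : C(X, E)) x = 0
    rw [hf, smul_zero]
  have hadd := hsmall (t • f) htfx htf
  have hsub := hsmall (-(t • f)) (by simp [hf]) (by rwa [norm_neg])
  rw [map_neg, ContinuousMap.neg_apply, ← sub_eq_add_neg] at hsub
  have := eq_zero_of_norm_add_le_of_norm_sub_le hv hadd hsub
  rw [map_smul, ContinuousMap.smul_apply, smul_eq_zero] at this
  exact this.resolve_left ht.ne'

theorem exists_representsAt [Nontrivial E] {x : X}
    (hx : x ∈ strongBoundaryPoints (A : Set C(X, E))) : ∃ y V, RepresentsAt S y x V := by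
  obtain ⟨u, hu⟩ := exists_norm_eq E zero_le_one
  obtain ⟨y, v, hv, hpeak⟩ := exists_forall_apply_eq_of_apply_eq S hx hu
  let L : A →ₗ[ℝ] E := (ContinuousMap.evalCLM ℝ x).toLinearMap ∘ₗ A.subtype
  let Φ : A →ₗ[ℝ] F := (ContinuousMap.evalCLM ℝ y).toLinearMap ∘ₗ S.toLinearMap
  have hL : Function.Surjective L := fun e =>
    (exists_apply_eq_norm_le_of_mem_strongBoundaryPoints hx e).imp fun _ hf => hf.1
  obtain ⟨V, hV⟩ := LinearMap.exists_comp_eq_of_ker_le hL (Φ := Φ) fun f hf =>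
    apply_eq_zero_of_apply_eq_zero S hx hu hv hpeak hf
  have hVL : ∀ f : A, V ((f : C(X, E)) x) = S f y := LinearMap.congr_fun hV
  have hbound : ∀ e, ‖V e‖ ≤ 1 * ‖e‖ := fun e => by
    obtain ⟨f, rfl, hf⟩ := exists_apply_eq_norm_le_of_mem_strongBoundaryPoints hx e
    rw [hVL, one_mul]
    exact ((S f).norm_coe_le_norm y).trans ((S.norm_map f).trans_le hf)
  refine ⟨y, V.mkContinuous 1 hbound, le_antisymm (V.mkContinuous_norm_le zero_le_one hbound) ?_,
    fun f => (hVL f).symm⟩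
  obtain ⟨f, hfx, hf⟩ := exists_apply_eq_norm_le_of_mem_strongBoundaryPoints hx u
  calc (1 : ℝ) = ‖V u‖ := by rw [← hfx, hVL, hpeak f (hu ▸ hf) hfx, hv]
    _ ≤ ‖V.mkContinuous 1 hbound‖ := by
      simpa [hu] using (V.mkContinuous 1 hbound).le_opNorm u

theorem exists_continuous_representsAt [Nontrivial E] [T1Space X] {C : Set X}
    (hC : C ⊆ strongBoundaryPoints (A : Set C(X, E))) :
    ∃ (Z : Set Y) (φ : Z → X) (V : Z → E →L[ℝ] F), Continuous φ ∧ (∀ y, φ y ∈ C) ∧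
      (∀ x ∈ C, ∃ y, φ y = x) ∧ ∀ y : Z, RepresentsAt S y (φ y) (V y) := by
  let Z : Set Y := {y | ∃ x ∈ C, ∃ V, RepresentsAt S y x V}
  choose φ hφC V hV using fun y : Z => y.2
  refine ⟨Z, φ, V, continuous_iff_continuousAt.mpr fun y W hW => ?_, hφC, fun x hx => ?_, hV⟩
  · have := (hV y).eventually_mem (hC (hφC y)) hW
    exact (continuous_subtype_val.continuousAt.eventually this).mono fun y' hy' => hy' _ _ (hV y')
  · obtain ⟨y, V', hV'⟩ := exists_representsAt S (hC hx)
    have hy : y ∈ Z := ⟨x, hx, V', hV'⟩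
    exact ⟨⟨y, hy⟩, hV'.eq (hC hx) (hV ⟨y, hy⟩)⟩

end StrongBoundary

/-- If `F` is strictly convex and `Ch(A) ⊆ Θ(A)`, then any surjective isometry
`T : A → B` is represented on a subset `Z ⊆ Y` by a continuous surjection
`φ : Z → Ch(A)` and norm-one real-linear operators `V_y : E → F`. -/
theorem stmt15 [Nontrivial E] [StrictConvexSpace ℝ F]
    (A : Subspace 𝕂 C(X, E)) (B : Subspace 𝕂 C(Y, F))
    (hCh : choquetBoundary A ⊆ strongBoundaryPoints (A : Set C(X, E)))
    (T : C(X, E) → C(Y, F))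
    (hmap : ∀ f ∈ A, T f ∈ B)
    (hsurj : ∀ g ∈ B, ∃ f ∈ A, T f = g)
    (hiso : ∀ f ∈ A, ∀ g ∈ A, ‖T f - T g‖ = ‖f - g‖) :
    ∃ (Z : Set Y) (φ : Z → X) (V : Z → (E →L[ℝ] F)),
      Continuous φ ∧
      (∀ y : Z, φ y ∈ choquetBoundary A) ∧
      (∀ x ∈ choquetBoundary A, ∃ y : Z, φ y = x) ∧
      (∀ y : Z, ‖V y‖ = 1) ∧
      (∀ f ∈ A, ∀ y : Z, T f (y : Y) = T 0 (y : Y) + V y (f (φ y))) := by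
  obtain ⟨S, hS⟩ := exists_linearIsometry_apply_eq_sub (A.restrictScalars ℝ)
    (B.restrictScalars ℝ) T hmap hsurj hiso
  obtain ⟨Z, φ, V, hφ, hφC, hφsurj, hrep⟩ := exists_continuous_representsAt S hCh
  refine ⟨Z, φ, V, hφ, hφC, hφsurj, fun y => (hrep y).1, fun f hf y => ?_⟩
  rw [← (hrep y).2 ⟨f, hf⟩, hS, ContinuousMap.sub_apply, add_sub_cancel]
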